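/- arXiv:1704.05286 — 4 statements merged into one kernel-verified Lean document; each statement's English description precedes it below -/
import Mathlib

section
/- Let K ⊆ V(G) be a cliquish vertex set and let S be a proper subset of K. Then crib(S, K) is a full component associated with S. -/
namespace TW

variable {V : Type} [Finite V]

/-- The open neighborhood of a vertex set `U`: vertices outside `U`
adjacent to some vertex of `U`. -/
def nbhd (G : SimpleGraph V) (U : Set V) : Set V :=
  {v | v ∉ U ∧ ∃ u ∈ U, G.Adj u v}

/-- The closed neighborhood `N[U] = U ∪ N(U)`. -/
def nbhdClosed (G : SimpleGraph V) (U : Set V) : Set V :=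
  U ∪ nbhd G U

/-- A set `C` is connected in `G` if the induced subgraph `G[C]` is connected. -/
def SetConnected (G : SimpleGraph V) (C : Set V) : Prop :=
  (G.induce C).Connected

/-- `C` is a component associated with `S`: a connected component of the
subgraph of `G` induced by the complement of `S`. -/
def IsCompAssoc (G : SimpleGraph V) (S C : Set V) : Prop :=
  SetConnected G C ∧ Disjoint C S ∧ nbhd G C ⊆ S

/-- `C` is a full component associated with `S`. -/
def IsFullComp (G : SimpleGraph V) (S C : Set V) : Prop :=
  IsCompAssoc G S C ∧ nbhd G C = S

/-- `S` is a minimal separator: at least two full components are associated with `S`. -/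
def MinimalSeparator (G : SimpleGraph V) (S : Set V) : Prop :=
  ∃ C D : Set V, IsFullComp G S C ∧ IsFullComp G S D ∧ C ≠ D

/-- The number of connected components of the subgraph induced by the complement of `S`. -/
noncomputable def numComponents (G : SimpleGraph V) (S : Set V) : ℕ :=
  Nat.card (G.induce (Sᶜ : Set V)).ConnectedComponent

/-- `S` is a separator of `G`: removing `S` increases the number of connected
components of `G`. -/
def Separator (G : SimpleGraph V) (S : Set V) : Prop :=
  numComponents G (∅ : Set V) < numComponents G S

/-- `S` is cliquish: every two distinct vertices of `S` are adjacent or lie in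
the neighborhood of a common component associated with `S`. -/
def Cliquish (G : SimpleGraph V) (S : Set V) : Prop :=
  ∀ u ∈ S, ∀ v ∈ S, u ≠ v →
    G.Adj u v ∨ ∃ C, IsCompAssoc G S C ∧ u ∈ nbhd G C ∧ v ∈ nbhd G C

/-- A graph is chordal if every induced cycle has length exactly three. -/
def IsChordal {W : Type} (H : SimpleGraph W) : Prop :=
  ∀ ⦃v : W⦄ (w : H.Walk v v), w.IsCycle →
    (∀ x ∈ w.support, ∀ y ∈ w.support, H.Adj x y → s(x, y) ∈ w.edges) →
    w.length = 3

/-- `H` is a minimal chordal completion of `G`. -/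
def MinChordalCompletion {W : Type} (G H : SimpleGraph W) : Prop :=
  G ≤ H ∧ IsChordal H ∧ ∀ H' : SimpleGraph W, G ≤ H' → H' ≤ H → IsChordal H' → H' = H

/-- `Ω` is a potential maximal clique of `G`: a clique in some minimal chordal
completion of `G`. -/
def PMC {W : Type} (G : SimpleGraph W) (Ω : Set W) : Prop :=
  ∃ H : SimpleGraph W, MinChordalCompletion G H ∧ H.IsClique Ω

/-- A tree-decomposition of `G`. -/
structure TreeDecomp {W : Type} (G : SimpleGraph W) where
  ι : Type
  tree : SimpleGraph ι
  isTree : tree.IsTree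
  bag : ι → Set W
  bag_cover : ∀ v : W, ∃ i, v ∈ bag i
  bag_edge : ∀ ⦃u v : W⦄, G.Adj u v → ∃ i, u ∈ bag i ∧ v ∈ bag i
  bag_conn : ∀ v : W, (tree.induce {i | v ∈ bag i}).Connected

/-- The width of a tree-decomposition: maximum bag size minus one. -/
noncomputable def TreeDecomp.width {W : Type} {G : SimpleGraph W} (td : TreeDecomp G) : ℕ :=
  (⨆ i, (td.bag i).ncard) - 1

/-- The treewidth of `G`: the minimum width over all tree-decompositions. -/
noncomputable def treewidth {W : Type} (G : SimpleGraph W) : ℕ :=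
  ⨅ td : TreeDecomp G, td.width

/-- The graph on `V` whose edges are all pairs of distinct vertices of `S`. -/
def cliqueOn {W : Type} (S : Set W) : SimpleGraph W where
  Adj u v := u ≠ v ∧ u ∈ S ∧ v ∈ S
  symm := ⟨fun u v ⟨h, hu, hv⟩ => ⟨h.symm, hv, hu⟩⟩
  loopless := ⟨fun u ⟨h, _, _⟩ => h rfl⟩

/-- `G⟨C⟩`: the graph on `N[C]` obtained from `G[N[C]]` by completing `N(C)` into a clique. -/
def gAngle (G : SimpleGraph V) (C : Set V) : SimpleGraph ↥(nbhdClosed G C) :=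
  (G ⊔ cliqueOn (nbhd G C)).induce (nbhdClosed G C)

/-- A connected set `C` is feasible if `tw(G⟨C⟩) ≤ k`. -/
def Feasible (G : SimpleGraph V) (k : ℕ) (C : Set V) : Prop :=
  treewidth (gAngle G C) ≤ k

/-- `crib S K`: the union of `K \ S` and all components associated with `K`
that are unconfined to `S` (i.e. whose neighborhood is not contained in `S`). -/
def crib (G : SimpleGraph V) (S K : Set V) : Set V :=
  (K \ S) ∪ ⋃ C ∈ {C : Set V | IsCompAssoc G K C ∧ ¬ nbhd G C ⊆ S}, C

section Order

variable [LinearOrder V]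

/-- The minimum element of a nonempty subset of a finite linear order. -/
noncomputable def setMin (U : Set V) (hU : U.Nonempty) : V :=
  wellFounded_lt.min U hU

/-- `U ≺ W`: `min U < min W` (for nonempty sets `U`, `W`). -/
def SetPrec (U W : Set V) : Prop :=
  ∃ (hU : U.Nonempty) (hW : W.Nonempty), setMin U hU < setMin W hW

/-- A connected set `C` is inbound if some full component `A` associated with
`N(C)` satisfies `A ≺ C`. -/
def Inbound (G : SimpleGraph V) (C : Set V) : Prop :=
  SetConnected G C ∧ ∃ A, IsFullComp G (nbhd G C) A ∧ SetPrec A C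

/-- A connected set is outbound if it is not inbound. -/
def Outbound (G : SimpleGraph V) (C : Set V) : Prop :=
  SetConnected G C ∧ ¬ ∃ A, IsFullComp G (nbhd G C) A ∧ SetPrec A C

open Classical in
/-- The outlet of `K`: `∅` if no non-full outbound component is associated with `K`;
otherwise `N(A)` for a non-full outbound component `A` associated with `K`
with `N(A)` maximal. -/
noncomputable def outlet (G : SimpleGraph V) (K : Set V) : Set V :=
  if h : ∃ A, IsCompAssoc G K A ∧ nbhd G A ≠ K ∧ Outbound G A ∧
      ∀ A', IsCompAssoc G K A' → nbhd G A' ≠ K → Outbound G A' →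
        ¬ nbhd G A ⊂ nbhd G A'
  then nbhd G h.choose
  else ∅

/-- `support K`: the components associated with `K` that are unconfined to `outlet K`. -/
def support (G : SimpleGraph V) (K : Set V) : Set (Set V) :=
  {C | IsCompAssoc G K C ∧ ¬ nbhd G C ⊆ outlet G K}

/-- An O-block `(N(A), A)` (with `A` outbound and `|N(A)| ≤ k`) is feasible if
`N(A) = ⋃_{C ∈ 𝒞} N(C)` for some set `𝒞` of feasible inbound connected sets. -/
def FeasibleOBlock (G : SimpleGraph V) (k : ℕ) (A : Set V) : Prop :=
  Outbound G A ∧ (nbhd G A).ncard ≤ k ∧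
    ∃ 𝒞 : Set (Set V), (∀ C ∈ 𝒞, Inbound G C ∧ Feasible G k C) ∧
      nbhd G A = ⋃ C ∈ 𝒞, nbhd G C

/-- A potential maximal clique `Ω` is buildable. -/
def Buildable (G : SimpleGraph V) (k : ℕ) (Ω : Set V) : Prop :=
  Ω.ncard ≤ k + 1 ∧
    ((∃ v : V, Ω = nbhdClosed G {v}) ∨
     (∃ 𝒞 ⊆ support G Ω, (∀ C ∈ 𝒞, Feasible G k C) ∧ Ω = ⋃ C ∈ 𝒞, nbhd G C) ∨
     (∃ A, FeasibleOBlock G k A ∧ ∃ v ∈ nbhd G A, Ω = nbhd G A ∪ (G.neighborSet v ∩ A)))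

end Order

/-! Every vertex of `crib S K` is joined inside it to a fixed `t ∈ K \ S`: two vertices of `K \ S`
are adjacent or both neighbours of a component associated with `K`, which is then unconfined
to `S`, and every unconfined component has a neighbour in `K \ S`. The neighbourhood of the crib
is `S`: a neighbour of `K \ S` outside `K` lies in a component unconfined to `S`, and each
`s ∈ S` is adjacent to `t` or to a component whose neighbourhood contains both `s` and `t`. -/

open SimpleGraph

section Connectivity

variable {V : Type} {G : SimpleGraph V} {P Q K : Set V} {u v : V}

lemma setConnected_singleton (v : V) : SetConnected G {v} := by
  rw [SetConnected, induce_singleton_eq_top]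
  exact connected_top

lemma SetConnected.union_of_adj (hP : SetConnected G P) (hQ : SetConnected G Q)
    (hu : u ∈ P) (hv : v ∈ Q) (huv : G.Adj u v) : SetConnected G (P ∪ Q) :=
  connected_induce_union hP.preconnected hQ.preconnected hu hv huv

lemma SetConnected.insert_of_adj (hP : SetConnected G P) (hu : u ∈ P) (huv : G.Adj u v) :
    SetConnected G (insert v P) := by
  rw [Set.insert_eq]
  exact (setConnected_singleton v).union_of_adj hP rfl hu huv.symm

lemma setConnected_of_forall_exists_setConnected (hu : u ∈ P)
    (h : ∀ v ∈ P, ∃ Q ⊆ P, u ∈ Q ∧ v ∈ Q ∧ SetConnected G Q) : SetConnected G P :=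
  induce_connected_of_patches u hu fun hv =>
    let ⟨Q, hQP, huQ, hvQ, hQ⟩ := h _ hv
    ⟨Q, hQP, huQ, hvQ, hQ.preconnected _ _⟩

lemma exists_isCompAssoc_mem [Finite V] (hv : v ∉ K) : ∃ C, IsCompAssoc G K C ∧ v ∈ C := by
  obtain ⟨C, hvC, ⟨hC, hCK⟩, hmax⟩ :=
    Finite.exists_le_maximal (p := fun C => SetConnected G C ∧ Disjoint C K)
      ⟨setConnected_singleton v, Set.disjoint_singleton_left.2 hv⟩
  refine ⟨C, ⟨hC, hCK, ?_⟩, hvC rfl⟩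
  rintro x ⟨hxC, u, huC, hux⟩
  by_contra hxK
  exact hxC (hmax ⟨hC.insert_of_adj huC hux, Set.disjoint_insert_left.2 ⟨hxK, hCK⟩⟩
    (Set.subset_insert x C) (Set.mem_insert x C))

end Connectivity

section Crib

variable {V : Type} {G : SimpleGraph V} {S K C : Set V} {t u v x : V}

lemma mem_crib : x ∈ crib G S K ↔
    x ∈ K \ S ∨ ∃ C, (IsCompAssoc G K C ∧ ¬ nbhd G C ⊆ S) ∧ x ∈ C := by
  simp [crib]

lemma diff_subset_crib : K \ S ⊆ crib G S K :=
  Set.subset_union_left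

lemma subset_crib (hC : IsCompAssoc G K C) (hCS : ¬ nbhd G C ⊆ S) : C ⊆ crib G S K :=
  fun _ hx => mem_crib.2 (.inr ⟨C, ⟨hC, hCS⟩, hx⟩)

lemma disjoint_crib (hSK : S ⊆ K) : Disjoint (crib G S K) S := by
  refine Set.disjoint_left.2 fun x hx hxS => ?_
  rcases mem_crib.1 hx with hxK | ⟨C, ⟨hC, -⟩, hxC⟩
  · exact hxK.2 hxS
  · exact Set.disjoint_left.1 hC.2.1 hxC (hSK hxS)

lemma nbhd_crib_subset [Finite V] : nbhd G (crib G S K) ⊆ S := by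
  rintro x ⟨hxR, u, huR, hux⟩
  by_contra hxS
  rcases mem_crib.1 huR with huK | ⟨C, ⟨hC, hCS⟩, huC⟩
  · by_cases hxK : x ∈ K
    · exact hxR (diff_subset_crib ⟨hxK, hxS⟩)
    obtain ⟨D, hD, hxD⟩ := exists_isCompAssoc_mem (G := G) hxK
    have huD : u ∈ nbhd G D := ⟨Set.disjoint_right.1 hD.2.1 huK.1, x, hxD, hux.symm⟩
    exact hxR (subset_crib hD (fun h => huK.2 (h huD)) hxD)
  · have hxC : x ∉ C := fun h => hxR (subset_crib hC hCS h)
    exact hxR (diff_subset_crib ⟨hC.2.2 ⟨hxC, u, huC, hux⟩, hxS⟩)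

lemma subset_nbhd_crib (hK : Cliquish G K) (hSK : S ⊂ K) : S ⊆ nbhd G (crib G S K) := by
  intro s hs
  obtain ⟨t, htK, htS⟩ := Set.exists_of_ssubset hSK
  refine ⟨fun h => Set.disjoint_left.1 (disjoint_crib hSK.subset) h hs, ?_⟩
  rcases hK s (hSK.subset hs) t htK (ne_of_mem_of_not_mem hs htS) with hst | ⟨C, hC, hsC, htC⟩
  · exact ⟨t, diff_subset_crib ⟨htK, htS⟩, hst.symm⟩
  · obtain ⟨-, c, hc, hcs⟩ := hsC
    exact ⟨c, subset_crib hC (fun h => htS (h htC)) hc, hcs⟩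

lemma exists_setConnected_subset_crib (hK : Cliquish G K) (hu : u ∈ K \ S) (hv : v ∈ K \ S) :
    ∃ P ⊆ crib G S K, u ∈ P ∧ v ∈ P ∧ SetConnected G P := by
  obtain rfl | huv := eq_or_ne u v
  · exact ⟨{u}, Set.singleton_subset_iff.2 (diff_subset_crib hu), rfl, rfl,
      setConnected_singleton u⟩
  rcases hK u hu.1 v hv.1 huv with hadj | ⟨C, hC, huC, ⟨-, d, hd, hdv⟩⟩
  · exact ⟨{u, v}, Set.insert_subset (diff_subset_crib hu)
      (Set.singleton_subset_iff.2 (diff_subset_crib hv)), .inl rfl, .inr rfl,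
      induce_pair_connected_of_adj hadj⟩
  have hCR := subset_crib hC (fun h => hu.2 (h huC))
  obtain ⟨-, c, hc, hcu⟩ := huC
  refine ⟨insert u (insert v C), ?_, .inl rfl, .inr (.inl rfl), ?_⟩
  · exact Set.insert_subset (diff_subset_crib hu) (Set.insert_subset (diff_subset_crib hv) hCR)
  · exact (hC.1.insert_of_adj hd hdv).insert_of_adj (.inr hc) hcu

lemma setConnected_crib (hK : Cliquish G K) (ht : t ∈ K \ S) : SetConnected G (crib G S K) := by
  refine setConnected_of_forall_exists_setConnected (diff_subset_crib ht) fun x hx => ?_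
  rcases mem_crib.1 hx with hxK | ⟨C, ⟨hC, hCS⟩, hxC⟩
  · exact exists_setConnected_subset_crib hK ht hxK
  obtain ⟨w, hwC, hwS⟩ := Set.not_subset.1 hCS
  obtain ⟨P, hP, htP, hwP, hPc⟩ := exists_setConnected_subset_crib hK ht ⟨hC.2.2 hwC, hwS⟩
  obtain ⟨-, c, hc, hcw⟩ := hwC
  exact ⟨C ∪ P, Set.union_subset (subset_crib hC hCS) hP, .inr htP, .inl hxC,
    hC.1.union_of_adj hPc hc hwP hcw⟩

end Crib

/-- If `K` is cliquish and `S` is a proper subset of `K`, then `crib S K` is a full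
component associated with `S`. -/
theorem crib_full_component {V : Type} [Finite V] (G : SimpleGraph V) (K S : Set V)
    (hK : Cliquish G K) (hS : S ⊂ K) :
    IsFullComp G S (crib G S K) := by
  obtain ⟨t, htK, htS⟩ := Set.exists_of_ssubset hS
  have hnbhd : nbhd G (crib G S K) = S := nbhd_crib_subset.antisymm (subset_nbhd_crib hK hS)
  exact ⟨⟨setConnected_crib hK ⟨htK, htS⟩, disjoint_crib hS.subset, hnbhd.le⟩, hnbhd⟩

end TW
end

section
/- Let C ⊆ V(G) be a connected set that is inbound. Then N(C) is a minimal separator of G. -/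
namespace TW

variable {V : Type} [Finite V]

theorem disjoint_nbhd {V : Type} (G : SimpleGraph V) (U : Set V) : Disjoint U (nbhd G U) :=
  Set.disjoint_right.mpr fun _ hv => hv.1

theorem isFullComp_nbhd_self {V : Type} {G : SimpleGraph V} {C : Set V}
    (hC : SetConnected G C) : IsFullComp G (nbhd G C) C :=
  ⟨⟨hC, disjoint_nbhd G C, le_rfl⟩, rfl⟩

theorem SetPrec.irrefl {V : Type} [Finite V] [LinearOrder V] (U : Set V) : ¬ SetPrec U U :=
  fun ⟨_, _, hlt⟩ => lt_irrefl _ hlt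

theorem inbound_minimal_separator_general {V : Type} [Finite V] [LinearOrder V] (G : SimpleGraph V)
    (C : Set V) (hC : Inbound G C) :
    MinimalSeparator G (nbhd G C) := by
  obtain ⟨hconn, A, hA, hprec⟩ := hC
  refine ⟨C, A, isFullComp_nbhd_self hconn, hA, ?_⟩
  rintro rfl
  exact SetPrec.irrefl C hprec

/-- If a connected set `C` is inbound, then `N(C)` is a minimal separator of `G`. -/
theorem inbound_minimal_separator {V : Type} [Finite V] [LinearOrder V] (G : SimpleGraph V)
    (hG : G.Connected) (C : Set V) (hC : Inbound G C) :
    MinimalSeparator G (nbhd G C) :=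
  inbound_minimal_separator_general G C hC

end TW
end

section
/- Let K ⊆ V(G) be a cliquish vertex set and let A_1 and A_2 be two components associated with K. If A_1 and A_2 are both outbound, then either N(A_1) ⊆ N(A_2) or N(A_2) ⊆ N(A_1). -/
namespace TW

/-! If neither neighbourhood contains the other, cliquishness of `K` places `A₂` inside a full
component of `G - N(A₁)`, and symmetrically. As `A₁` is outbound, that full component does not
precede `A₁`, so `min A₁ ≤ min A₂`; symmetrically `min A₂ ≤ min A₁`. The two components then
share their minimum vertex and coincide. -/

section Components

variable {V : Type} {G : SimpleGraph V}

theorem SetConnected.subset_of_mem {B C S : Set V} (hC : SetConnected G C) (hCS : Disjoint C S)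
    (hB : nbhd G B ⊆ S) {x : V} (hxC : x ∈ C) (hxB : x ∈ B) : C ⊆ B := by
  intro c hc
  by_contra hcB
  obtain ⟨p⟩ := hC.preconnected ⟨x, hxC⟩ ⟨c, hc⟩
  obtain ⟨d, -, hd₁, hd₂⟩ := p.exists_boundary_dart {y | y.val ∈ B} hxB hcB
  exact Set.disjoint_left.mp hCS d.snd.property (hB ⟨hd₂, _, hd₁, d.adj⟩)

theorem IsCompAssoc.eq_of_mem {S C D : Set V} (hC : IsCompAssoc G S C) (hD : IsCompAssoc G S D)
    {x : V} (hxC : x ∈ C) (hxD : x ∈ D) : C = D :=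
  (hC.1.subset_of_mem hC.2.1 hD.2.2 hxC hxD).antisymm
    (hD.1.subset_of_mem hD.2.1 hC.2.2 hxD hxC)

theorem IsCompAssoc.mem_of_adj {S D : Set V} (hD : IsCompAssoc G S D) {c w : V} (hc : c ∈ D)
    (hw : w ∉ S) (hcw : G.Adj c w) : w ∈ D := by
  by_contra hwD
  exact hw (hD.2.2 ⟨hwD, c, hc, hcw⟩)

/-- The union of all connected sets that avoid `S` and contain a fixed vertex of `A`. -/
theorem exists_isCompAssoc_superset {S A : Set V} (hA : SetConnected G A) (hAS : Disjoint A S) :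
    ∃ D, IsCompAssoc G S D ∧ A ⊆ D := by
  obtain ⟨⟨x, hx⟩⟩ := hA.nonempty
  set 𝒟 : Set (Set V) := {C | SetConnected G C ∧ Disjoint C S ∧ x ∈ C}
  have hA𝒟 : A ∈ 𝒟 := ⟨hA, hAS, hx⟩
  have hconn : SetConnected G (⋃₀ 𝒟) :=
    SimpleGraph.induce_sUnion_connected_of_pairwise_not_disjoint ⟨A, hA𝒟⟩
      (fun hC hD => ⟨x, hC.2.2, hD.2.2⟩) (fun hC => hC.1)
  have hdisj : Disjoint (⋃₀ 𝒟) S := Set.disjoint_sUnion_left.mpr fun C hC => hC.2.1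
  refine ⟨⋃₀ 𝒟, ⟨hconn, hdisj, ?_⟩, Set.subset_sUnion_of_mem hA𝒟⟩
  rintro w ⟨hw𝒟, u, hu, huw⟩
  by_contra hwS
  have hext : ⋃₀ 𝒟 ∪ {u, w} ∈ 𝒟 := by
    refine ⟨SimpleGraph.induce_union_connected hconn.preconnected
        (SimpleGraph.induce_pair_connected_of_adj huw).preconnected ⟨u, hu, Or.inl rfl⟩,
      ?_, Or.inl (Set.mem_sUnion_of_mem hx hA𝒟)⟩
    refine Set.disjoint_union_left.mpr ⟨hdisj, ?_⟩
    rw [Set.disjoint_insert_left, Set.disjoint_singleton_left]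
    exact ⟨Set.disjoint_left.mp hdisj hu, hwS⟩
  exact hw𝒟 (Set.mem_sUnion_of_mem (Or.inr (Or.inr rfl)) hext)

/-- Cliquishness of `K` is what makes `D` full: a vertex `u ∈ N(A₁)` is either adjacent to `v`,
or shares with `v` the neighbourhood of a component of `G - K`, which then lies inside `D`. -/
theorem nbhd_eq_of_cliquish {K A₁ A₂ D : Set V} (hK : Cliquish G K) (h1 : IsCompAssoc G K A₁)
    (h2 : IsCompAssoc G K A₂) (hD : IsCompAssoc G (nbhd G A₁) D) (hA₂D : A₂ ⊆ D) {v : V}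
    (hv2 : v ∈ nbhd G A₂) (hv1 : v ∉ nbhd G A₁) : nbhd G D = nbhd G A₁ := by
  refine hD.2.2.antisymm fun u hu => ?_
  have huD : u ∉ D := Set.disjoint_right.mp hD.2.1 hu
  have ⟨_, a, ha, hav⟩ := hv2
  have hvD : v ∈ D := hD.mem_of_adj (hA₂D ha) hv1 hav
  have huv : u ≠ v := fun h => hv1 (h ▸ hu)
  rcases hK u (h1.2.2 hu) v (h2.2.2 hv2) huv with
    huv | ⟨C, hC, ⟨-, c, hc, hcu⟩, ⟨-, c', hc', hc'v⟩⟩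
  · exact ⟨huD, v, hvD, huv.symm⟩
  · have hCN : Disjoint C (nbhd G A₁) := hC.2.1.mono_right h1.2.2
    have hc'D : c' ∈ D := hD.mem_of_adj hvD (Set.disjoint_left.mp hCN hc') hc'v.symm
    exact ⟨huD, c, hC.1.subset_of_mem hCN hD.2.2 hc' hc'D hc, hcu⟩

theorem exists_isFullComp_superset_of_not_subset {K A₁ A₂ : Set V} (hK : Cliquish G K)
    (h1 : IsCompAssoc G K A₁) (h2 : IsCompAssoc G K A₂) (h : ¬ nbhd G A₂ ⊆ nbhd G A₁) :
    ∃ D, IsFullComp G (nbhd G A₁) D ∧ A₂ ⊆ D := by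
  obtain ⟨v, hv2, hv1⟩ := Set.not_subset.mp h
  obtain ⟨D, hD, hA₂D⟩ := exists_isCompAssoc_superset h2.1 (h2.2.1.mono_right h1.2.2)
  exact ⟨D, ⟨hD, nbhd_eq_of_cliquish hK h1 h2 hD hA₂D hv2 hv1⟩, hA₂D⟩

end Components

section SetMin

variable {V : Type} [Finite V] [LinearOrder V] {G : SimpleGraph V}

theorem setMin_mem {U : Set V} (hU : U.Nonempty) : setMin U hU ∈ U :=
  wellFounded_lt.min_mem U hU

theorem setMin_le_setMin_of_subset {U W : Set V} (hU : U.Nonempty) (hW : W.Nonempty)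
    (h : U ⊆ W) : setMin W hW ≤ setMin U hU :=
  not_lt.mp (wellFounded_lt.not_lt_min W (h (setMin_mem hU)))

theorem Outbound.setMin_le_of_isFullComp {A D : Set V} (hA : Outbound G A)
    (hD : IsFullComp G (nbhd G A) D) (hAne : A.Nonempty) (hDne : D.Nonempty) :
    setMin A hAne ≤ setMin D hDne :=
  not_lt.mp fun hlt => hA.2 ⟨D, hD, hDne, hAne, hlt⟩

theorem Outbound.setMin_le_of_not_nbhd_subset {K A₁ A₂ : Set V} (hK : Cliquish G K)
    (h1 : IsCompAssoc G K A₁) (h2 : IsCompAssoc G K A₂) (ho1 : Outbound G A₁)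
    (h : ¬ nbhd G A₂ ⊆ nbhd G A₁) (hA₁ : A₁.Nonempty) (hA₂ : A₂.Nonempty) :
    setMin A₁ hA₁ ≤ setMin A₂ hA₂ := by
  obtain ⟨D, hD, hA₂D⟩ := exists_isFullComp_superset_of_not_subset hK h1 h2 h
  have hDne : D.Nonempty := hA₂.mono hA₂D
  exact (ho1.setMin_le_of_isFullComp hD hA₁ hDne).trans
    (setMin_le_setMin_of_subset hA₂ hDne hA₂D)

end SetMin

theorem outbound_neighborhoods_nested_general {V : Type} [Finite V] [LinearOrder V]
    (G : SimpleGraph V) (K A₁ A₂ : Set V) (hK : Cliquish G K)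
    (h1 : IsCompAssoc G K A₁) (h2 : IsCompAssoc G K A₂)
    (ho1 : Outbound G A₁) (ho2 : Outbound G A₂) :
    nbhd G A₁ ⊆ nbhd G A₂ ∨ nbhd G A₂ ⊆ nbhd G A₁ := by
  by_contra! ⟨h12, h21⟩
  have hA₁ : A₁.Nonempty := Set.nonempty_coe_sort.mp h1.1.nonempty
  have hA₂ : A₂.Nonempty := Set.nonempty_coe_sort.mp h2.1.nonempty
  have hmin : setMin A₁ hA₁ = setMin A₂ hA₂ :=
    (ho1.setMin_le_of_not_nbhd_subset hK h1 h2 h21 hA₁ hA₂).antisymm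
      (ho2.setMin_le_of_not_nbhd_subset hK h2 h1 h12 hA₂ hA₁)
  have hA : A₁ = A₂ := h1.eq_of_mem h2 (setMin_mem hA₁) (hmin ▸ setMin_mem hA₂)
  exact h12 (hA ▸ subset_rfl)

/-- If `K` is cliquish and `A₁`, `A₂` are outbound components associated with `K`, then
either `N(A₁) ⊆ N(A₂)` or `N(A₂) ⊆ N(A₁)`. -/
theorem outbound_neighborhoods_nested {V : Type} [Finite V] [LinearOrder V]
    (G : SimpleGraph V) (hG : G.Connected) (K A₁ A₂ : Set V) (hK : Cliquish G K)
    (h1 : IsCompAssoc G K A₁) (h2 : IsCompAssoc G K A₂)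
    (ho1 : Outbound G A₁) (ho2 : Outbound G A₂) :
    nbhd G A₁ ⊆ nbhd G A₂ ∨ nbhd G A₂ ⊆ nbhd G A₁ :=
  outbound_neighborhoods_nested_general G K A₁ A₂ hK h1 h2 ho1 ho2

end TW
end

section
/- Let Ω ⊆ V(G) be a cliquish set with no full component associated with it, and let v ∈ Ω be a vertex such that v ∉ N(C) for every component C associated with Ω. Then Ω = N[v]. -/
namespace TW

variable {V : Type} [Finite V]

lemma exists_isCompAssoc_mem_s15 (G : SimpleGraph V) {S : Set V} {w : V} (hw : w ∉ S) :
    ∃ C, IsCompAssoc G S C ∧ w ∈ C := by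
  classical
  let C : Set V := {x | ∃ p : G.Walk x w, ∀ y ∈ p.support, y ∉ S}
  have hwC : w ∈ C := ⟨.nil, by simpa using hw⟩
  have support_subset {x : V} (p : G.Walk x w) (hp : ∀ y ∈ p.support, y ∉ S) :
      {y | y ∈ p.support} ⊆ C := fun y hy =>
    ⟨p.dropUntil y hy, fun z hz => hp z (p.support_dropUntil_subset_support hy hz)⟩
  refine ⟨C, ⟨?_, ?_, ?_⟩, hwC⟩
  · refine G.induce_connected_of_patches w hwC fun {x} ⟨p, hp⟩ => ?_
    exact ⟨_, support_subset p hp, p.end_mem_support, p.start_mem_support,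
      p.connected_induce_support.preconnected _ _⟩
  · exact Set.disjoint_left.mpr fun x ⟨p, hp⟩ => hp x p.start_mem_support
  · rintro y ⟨hyC, x, ⟨p, hp⟩, hxy⟩
    by_contra hyS
    exact hyC ⟨.cons hxy.symm p, by simpa [hyS] using hp⟩

lemma exists_isCompAssoc_mem_nbhd_of_adj (G : SimpleGraph V) {S : Set V} {u v : V}
    (hv : v ∈ S) (hu : u ∉ S) (huv : G.Adj v u) :
    ∃ C, IsCompAssoc G S C ∧ v ∈ nbhd G C := by
  obtain ⟨C, hC, huC⟩ := exists_isCompAssoc_mem_s15 G hu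
  exact ⟨C, hC, fun hvC => Set.disjoint_left.mp hC.2.1 hvC hv, u, huC, huv.symm⟩

lemma nbhdClosed_singleton_subset {G : SimpleGraph V} {S : Set V} {v : V} (hv : v ∈ S)
    (hvn : ∀ C, IsCompAssoc G S C → v ∉ nbhd G C) : nbhdClosed G {v} ⊆ S := by
  rintro u (rfl | ⟨-, _, rfl, hvu⟩)
  · exact hv
  · by_contra hu
    obtain ⟨C, hC, hvC⟩ := exists_isCompAssoc_mem_nbhd_of_adj G hv hu hvu
    exact hvn C hC hvC

lemma Cliquish.subset_nbhdClosed_singleton {G : SimpleGraph V} {S : Set V} (hS : Cliquish G S)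
    {v : V} (hv : v ∈ S) (hvn : ∀ C, IsCompAssoc G S C → v ∉ nbhd G C) :
    S ⊆ nbhdClosed G {v} := by
  intro u hu
  obtain rfl | huv := eq_or_ne u v
  · exact Or.inl rfl
  obtain hvu | ⟨C, hC, hvC, -⟩ := hS v hv u hu huv.symm
  · exact Or.inr ⟨huv, v, rfl, hvu⟩
  · exact absurd hvC (hvn C hC)

theorem cliquish_closed_neighborhood_general {V : Type} [Finite V] (G : SimpleGraph V)
    (Ω : Set V) (hcl : Cliquish G Ω)
    (v : V) (hv : v ∈ Ω)
    (hvn : ∀ C : Set V, IsCompAssoc G Ω C → v ∉ nbhd G C) :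
    Ω = nbhdClosed G {v} :=
  (hcl.subset_nbhdClosed_singleton hv hvn).antisymm (nbhdClosed_singleton_subset hv hvn)

/-- If `Ω` is cliquish with no full component associated with it, and `v ∈ Ω` lies in
`N(C)` for no component `C` associated with `Ω`, then `Ω = N[v]`. -/
theorem cliquish_closed_neighborhood {V : Type} [Finite V] (G : SimpleGraph V)
    (hG : G.Connected) (Ω : Set V) (hcl : Cliquish G Ω)
    (hnf : ¬ ∃ C : Set V, IsFullComp G Ω C) (v : V) (hv : v ∈ Ω)
    (hvn : ∀ C : Set V, IsCompAssoc G Ω C → v ∉ nbhd G C) :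
    Ω = nbhdClosed G {v} :=
  cliquish_closed_neighborhood_general G Ω hcl v hv hvn

end TW
end
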